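/- Let ū : ℝ² → ℝ be C² and satisfy Δū + (8/(α(1+|y|²)²))(e^{ū} − 1) = 0 on ℝ², with 0 < α ≤ 1. Define v(y) := ū(y) − (2/α) ln(1+|y|²) + ln(8/α) and w(y) := ln((1+|y|²)^{2(1/α − 1)} e^{v(y)}). Then w satisfies Δw + e^w = 8(1/α − 1)/(1+|y|²)² on ℝ²; in particular Δw + e^w ≥ 0, with equality everywhere iff α = 1. -/

import Mathlib

open MeasureTheory Real RealInnerProductSpace

noncomputable section

abbrev E3 := EuclideanSpace ℝ (Fin 3)
abbrev E2 := EuclideanSpace ℝ (Fin 2)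

/-- Flat Laplacian (sum of second partials) on `E3`. -/
def lap3 (f : E3 → ℝ) (x : E3) : ℝ :=
  ∑ i, fderiv ℝ (fun y => fderiv ℝ f y (EuclideanSpace.single i 1)) x (EuclideanSpace.single i 1)

/-- Flat Laplacian (sum of second partials) on `E2`. -/
def lap2 (f : E2 → ℝ) (x : E2) : ℝ :=
  ∑ i, fderiv ℝ (fun y => fderiv ℝ f y (EuclideanSpace.single i 1)) x (EuclideanSpace.single i 1)

/-- The point `(a, b, c)` of `E3`. -/
def mk3 (a b c : ℝ) : E3 := (WithLp.equiv 2 (Fin 3 → ℝ)).symm ![a, b, c]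

/-- Reflection of `ℝ²` across the first coordinate axis. -/
def refl2 (y : E2) : E2 := (WithLp.equiv 2 (Fin 2 → ℝ)).symm ![y 0, -(y 1)]

/-! Since `2 (1/α - 1) ln q - (2/α) ln q = -2 ln q` for `q = 1 + |y|²`, the transform is simply
`w = ū + ln (8/α) - 2 ln q`, so that `e^w = (8/α) e^ū / q²`. The only genuine computation is
`Δ ln q = 4 / q²`; with it, the equation for `ū` turns `Δw + e^w` into
`(8/(α q²)) (1 - e^ū) - 8/q² + (8/α) e^ū / q² = 8 (1/α - 1) / q²`, whose sign is that of
`1/α - 1`. -/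

section

variable {E : Type*} [NormedAddCommGroup E] [InnerProductSpace ℝ E]

lemma hasFDerivAt_one_add_norm_sq (y : E) :
    HasFDerivAt (fun z : E => 1 + ‖z‖ ^ 2) (2 • innerSL ℝ y) y :=
  (hasStrictFDerivAt_norm_sq y).hasFDerivAt.const_add 1

lemma contDiff_log_one_add_norm_sq {n : WithTop ℕ∞} :
    ContDiff ℝ n (fun z : E => Real.log (1 + ‖z‖ ^ 2)) :=
  (contDiff_const.add (contDiff_norm_sq ℝ)).log fun _ => by positivity

lemma fderiv_log_one_add_norm_sq_apply (y v : E) :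
    fderiv ℝ (fun z : E => Real.log (1 + ‖z‖ ^ 2)) y v = 2 * ⟪y, v⟫ / (1 + ‖y‖ ^ 2) := by
  rw [((hasFDerivAt_one_add_norm_sq y).log (by positivity)).fderiv]
  simp
  field_simp

lemma fderiv_inner_div_one_add_norm_sq_apply (y v : E) :
    fderiv ℝ (fun z : E => 2 * ⟪z, v⟫ / (1 + ‖z‖ ^ 2)) y v
      = 2 * ‖v‖ ^ 2 / (1 + ‖y‖ ^ 2) - 4 * ⟪y, v⟫ ^ 2 / (1 + ‖y‖ ^ 2) ^ 2 := by
  have hnum := ((hasFDerivAt_id y).inner ℝ (hasFDerivAt_const v y)).const_mul 2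
  have hinv := (hasDerivAt_inv (by positivity)).comp_hasFDerivAt y (hasFDerivAt_one_add_norm_sq y)
  have h : HasFDerivAt (fun z : E => 2 * ⟪z, v⟫ / (1 + ‖z‖ ^ 2)) _ y := hnum.mul hinv
  rw [h.fderiv]
  simp
  field_simp
  ring

end

lemma lap2_log_one_add_norm_sq (y : E2) :
    lap2 (fun z => Real.log (1 + ‖z‖ ^ 2)) y = 4 / (1 + ‖y‖ ^ 2) ^ 2 := by
  simp only [lap2, fderiv_log_one_add_norm_sq_apply, fderiv_inner_div_one_add_norm_sq_apply]
  simp only [PiLp.norm_single, norm_one, EuclideanSpace.inner_single_right, conj_trivial, one_mul,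
    Fin.sum_univ_two]
  rw [EuclideanSpace.norm_sq_eq y, Fin.sum_univ_two]
  simp only [Real.norm_eq_abs, sq_abs]
  field_simp
  ring

section

open Laplacian

lemma lap2_eq_laplacian {f : E2 → ℝ} {x : E2} (hf : ContDiffAt ℝ 2 f x) :
    lap2 f x = Δ f x := by
  have hd : DifferentiableAt ℝ (fderiv ℝ f) x :=
    (hf.fderiv_right (m := 1) (by norm_num)).differentiableAt one_ne_zero
  rw [InnerProductSpace.laplacian_eq_iteratedFDeriv_orthonormalBasis f
    (EuclideanSpace.basisFun (Fin 2) ℝ), lap2]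
  refine Finset.sum_congr rfl fun i _ => ?_
  rw [iteratedFDeriv_two_apply, fderiv_clm_apply hd (differentiableAt_const _)]
  simp

lemma lap2_add_const_sub_mul {f g : E2 → ℝ} (hf : ContDiff ℝ 2 f) (hg : ContDiff ℝ 2 g)
    (c a : ℝ) (x : E2) :
    lap2 (fun y => f y + c - a * g y) x = lap2 f x - a * lap2 g x := by
  have hfc : ContDiff ℝ 2 (f + fun _ => c) := hf.add contDiff_const
  have hag : ContDiff ℝ 2 (a • g) := hg.const_smul a
  have hsum : ContDiff ℝ 2 ((f + fun _ => c) - a • g) := hfc.sub hag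
  change lap2 ((f + fun _ => c) - a • g) x = _
  rw [lap2_eq_laplacian hsum.contDiffAt, hfc.contDiffAt.laplacian_sub hag.contDiffAt,
    hf.contDiffAt.laplacian_add contDiff_const.contDiffAt,
    InnerProductSpace.laplacian_smul a hg.contDiffAt, lap2_eq_laplacian hf.contDiffAt,
    lap2_eq_laplacian hg.contDiffAt]
  simp

end

/-- the change of variables turning the projected mean field equation into
a Liouville-type equation: with `v = ū − (2/α) ln(1+|y|²) + ln(8/α)` and
`w = ln((1+|y|²)^{2(1/α−1)} e^v)`, one has `Δw + e^w = 8(1/α−1)/(1+|y|²)²`, hence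
`Δw + e^w ≥ 0`, with equality everywhere iff `α = 1`. -/
theorem liouville_transform (α : ℝ) (hα0 : 0 < α) (hα1 : α ≤ 1)
    (ubar : E2 → ℝ) (hub : ContDiff ℝ 2 ubar)
    (hpde : ∀ y : E2, lap2 ubar y + 8 / (α * (1 + ‖y‖ ^ 2) ^ 2) * (Real.exp (ubar y) - 1) = 0)
    (v w : E2 → ℝ)
    (hv : ∀ y, v y = ubar y - 2 / α * Real.log (1 + ‖y‖ ^ 2) + Real.log (8 / α))
    (hw : ∀ y, w y = Real.log ((1 + ‖y‖ ^ 2) ^ (2 * (1 / α - 1)) * Real.exp (v y))) :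
    (∀ y : E2, lap2 w y + Real.exp (w y) = 8 * (1 / α - 1) / (1 + ‖y‖ ^ 2) ^ 2) ∧
      (∀ y : E2, 0 ≤ lap2 w y + Real.exp (w y)) ∧
      ((∀ y : E2, lap2 w y + Real.exp (w y) = 0) ↔ α = 1) := by
  have hw' : w = fun y => ubar y + Real.log (8 / α) - 2 * Real.log (1 + ‖y‖ ^ 2) := by
    funext y
    rw [hw y, Real.log_mul (by positivity) (Real.exp_pos _).ne', Real.log_rpow (by positivity),
      Real.log_exp, hv y]
    field_simp
    ring
  have hexp (y : E2) : Real.exp (w y) = 8 / α * Real.exp (ubar y) / (1 + ‖y‖ ^ 2) ^ 2 := by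
    rw [hw', Real.exp_sub, Real.exp_add, Real.exp_log (by positivity), mul_comm 2,
      Real.exp_mul, Real.rpow_two, Real.exp_log (by positivity)]
    ring
  have hmain (y : E2) :
      lap2 w y + Real.exp (w y) = 8 * (1 / α - 1) / (1 + ‖y‖ ^ 2) ^ 2 := by
    rw [hexp, hw', lap2_add_const_sub_mul hub contDiff_log_one_add_norm_sq,
      lap2_log_one_add_norm_sq, eq_neg_of_add_eq_zero_left (hpde y)]
    field_simp
    ring
  refine ⟨hmain, fun y => ?_, ⟨fun h => ?_, fun h y => ?_⟩⟩
  · rw [hmain y]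
    have : 1 ≤ 1 / α := one_le_one_div hα0 hα1
    exact div_nonneg (by linarith) (by positivity)
  · have h0 := (hmain 0).symm.trans (h 0)
    norm_num at h0
    exact inv_eq_one.mp (sub_eq_zero.mp h0)
  · rw [hmain y, h]
    norm_num
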